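/- Let α ∈ (0,1), M a positive integer, ε = 2^{−M}, and g_α^M(v) = Σ_{n=M}^∞ 2^{−nα} sin(2^n π v). Then for every v₀ ∈ ℝ and u ∈ (0, ε), ∫_{v₀−ε}^{v₀+ε} (g_α^M(v) − g_α^M(v−u))² dv ≥ 4^α ε u^{2α}. -/

import Mathlib

open Real MeasureTheory

lemma cosInt {ω θ a b : ℝ} (hω : ω ≠ 0) (k : ℤ) (h : ω * (b - a) = k * (2 * π)) :
    ∫ v in a..b, Real.cos (ω * v + θ) = 0 := by
  rw [intervalIntegral.integral_comp_mul_add Real.cos hω θ, integral_cos]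
  have : ω * b + θ = (ω * a + θ) + k * (2 * π) := by linarith
  rw [this, Real.sin_add_int_mul_two_pi]
  simp

lemma orth (M m l : ℕ) (hm : M ≤ m) (hl : M ≤ l) (s a : ℝ) :
    ∫ v in a..(a + 2 * ((2:ℝ) ^ M)⁻¹),
      Real.cos ((2:ℝ) ^ m * π * (v - s)) * Real.cos ((2:ℝ) ^ l * π * (v - s)) =
      if m = l then ((2:ℝ) ^ M)⁻¹ else 0 := by
  have hπ := Real.pi_pos
  have h2M : (0:ℝ) < 2 ^ M := by positivity
  set ε : ℝ := ((2:ℝ) ^ M)⁻¹ with hεdef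
  have hε0 : 0 < ε := by positivity
  have h2pow : ∀ n : ℕ, M ≤ n → (2:ℝ) ^ n * ε = (2:ℝ) ^ (n - M) := by
    intro n hn
    rw [hεdef, ← div_eq_mul_inv]
    exact (pow_sub₀ _ (by norm_num) hn).symm
  have hprod : ∀ v : ℝ,
      Real.cos ((2:ℝ) ^ m * π * (v - s)) * Real.cos ((2:ℝ) ^ l * π * (v - s)) =
      (Real.cos ((((2:ℝ) ^ m - 2 ^ l) * π) * v + (-(((2:ℝ) ^ m - 2 ^ l) * π) * s)) +
        Real.cos ((((2:ℝ) ^ m + 2 ^ l) * π) * v + (-(((2:ℝ) ^ m + 2 ^ l) * π) * s))) / 2 := by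
    intro v
    have h1 := Real.cos_sub ((2:ℝ) ^ m * π * (v - s)) ((2:ℝ) ^ l * π * (v - s))
    have h2 := Real.cos_add ((2:ℝ) ^ m * π * (v - s)) ((2:ℝ) ^ l * π * (v - s))
    have e1 : (2:ℝ) ^ m * π * (v - s) - (2:ℝ) ^ l * π * (v - s)
        = (((2:ℝ) ^ m - 2 ^ l) * π) * v + (-(((2:ℝ) ^ m - 2 ^ l) * π) * s) := by ring
    have e2 : (2:ℝ) ^ m * π * (v - s) + (2:ℝ) ^ l * π * (v - s)
        = (((2:ℝ) ^ m + 2 ^ l) * π) * v + (-(((2:ℝ) ^ m + 2 ^ l) * π) * s) := by ring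
    rw [e1] at h1; rw [e2] at h2
    linarith
  simp only [hprod]
  rw [intervalIntegral.integral_div]
  have hc1 : Continuous fun v : ℝ =>
      Real.cos ((((2:ℝ) ^ m - 2 ^ l) * π) * v + (-(((2:ℝ) ^ m - 2 ^ l) * π) * s)) := by
    fun_prop
  have hc2 : Continuous fun v : ℝ =>
      Real.cos ((((2:ℝ) ^ m + 2 ^ l) * π) * v + (-(((2:ℝ) ^ m + 2 ^ l) * π) * s)) := by
    fun_prop
  rw [intervalIntegral.integral_add (hc1.intervalIntegrable _ _) (hc2.intervalIntegrable _ _)]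
  have hI2 : (∫ v in a..(a + 2 * ε),
      Real.cos ((((2:ℝ) ^ m + 2 ^ l) * π) * v + (-(((2:ℝ) ^ m + 2 ^ l) * π) * s))) = 0 := by
    apply cosInt (k := ((2:ℤ) ^ (m - M) + 2 ^ (l - M)))
    · positivity
    · push_cast
      have e1 := h2pow m hm
      have e2 := h2pow l hl
      have : (a + 2 * ε) - a = 2 * ε := by ring
      rw [this]
      nlinarith [e1, e2]
  rw [hI2, add_zero]
  by_cases hml : m = l
  · subst hml
    simp only [if_pos rfl, sub_self, zero_mul, zero_add]
    rw [intervalIntegral.integral_const]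
    simp [Real.cos_zero]
  · rw [if_neg hml]
    have hI1 : (∫ v in a..(a + 2 * ε),
        Real.cos ((((2:ℝ) ^ m - 2 ^ l) * π) * v + (-(((2:ℝ) ^ m - 2 ^ l) * π) * s))) = 0 := by
      apply cosInt (k := ((2:ℤ) ^ (m - M) - 2 ^ (l - M)))
      · exact mul_ne_zero (sub_ne_zero.2 (fun h => hml
          (Nat.pow_right_injective (le_refl 2) (by exact_mod_cast h)))) Real.pi_ne_zero
      · push_cast
        have e1 := h2pow m hm
        have e2 := h2pow l hl
        have : (a + 2 * ε) - a = 2 * ε := by ring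
        rw [this]
        nlinarith [e1, e2]
    rw [hI1]
    norm_num


lemma arithKey {α T u : ℝ} (hα1 : 0 < α) (hα2 : α < 1) (hu0 : 0 < u) (hT0 : 0 < T)
    (h1 : 2⁻¹ ≤ T * u) :
    (4:ℝ) ^ α * u ^ (2*α) ≤ (2 * T ^ (-α) * (T * u)) ^ 2 := by
  have htu0 : (0:ℝ) < T * u := by positivity
  have h4 : (2:ℝ) ^ (2:ℝ) = 4 := by rw [Real.rpow_two]; norm_num
  have e1 : T ^ (-α) * (T * u) = (T * u) ^ (1 - α) * u ^ α := by
    rw [Real.mul_rpow hT0.le hu0.le, mul_assoc, ← Real.rpow_add hu0,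
      show (1:ℝ) - α + α = 1 by ring, Real.rpow_one,
      show (1:ℝ) - α = -α + 1 by ring, Real.rpow_add hT0, Real.rpow_one]
    ring
  have e2 : (2 * T ^ (-α) * (T * u)) ^ 2 = 4 * ((T * u) ^ (2 - 2*α) * u ^ (2*α)) := by
    rw [mul_assoc, e1, mul_pow, mul_pow,
      ← Real.rpow_two ((T*u) ^ (1-α)), ← Real.rpow_two (u ^ α),
      ← Real.rpow_mul htu0.le, ← Real.rpow_mul hu0.le,
      show ((1:ℝ) - α) * 2 = 2 - 2*α by ring, show α * 2 = 2*α by ring]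
    norm_num
  have e3 : (2:ℝ)⁻¹ ^ (2 - 2*α) ≤ (T * u) ^ (2 - 2*α) :=
    Real.rpow_le_rpow (by norm_num) h1 (by linarith)
  have e4 : 4 * ((2:ℝ)⁻¹ ^ (2 - 2*α)) = 4 ^ α := by
    rw [Real.inv_rpow (by norm_num : (0:ℝ) ≤ 2), ← Real.rpow_neg (by norm_num : (0:ℝ) ≤ 2)]
    calc 4 * (2:ℝ) ^ (-(2 - 2*α)) = 2 ^ (2:ℝ) * 2 ^ (-(2 - 2*α)) := by rw [h4]
      _ = 2 ^ ((2:ℝ) + -(2 - 2*α)) := (Real.rpow_add two_pos _ _).symm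
      _ = 2 ^ ((2:ℝ) * α) := by ring_nf
      _ = (2 ^ (2:ℝ)) ^ α := Real.rpow_mul (by norm_num) 2 α
      _ = 4 ^ α := by rw [h4]
  calc (4:ℝ) ^ α * u ^ (2*α) = (4 * ((2:ℝ)⁻¹ ^ (2 - 2*α))) * u ^ (2*α) := by rw [e4]
    _ ≤ (4 * ((T*u) ^ (2 - 2*α))) * u ^ (2*α) := by
        apply mul_le_mul_of_nonneg_right (by linarith) (Real.rpow_nonneg hu0.le _)
    _ = (2 * T ^ (-α) * (T * u)) ^ 2 := by rw [e2]; ring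


/-- The tail Weierstrass-type series `g_α^M(v) = ∑_{n ≥ M} 2^{-nα} sin(2^n π v)`. -/
noncomputable def weierstrassTail (α : ℝ) (M : ℕ) (v : ℝ) : ℝ :=
  ∑' n : ℕ, (2 : ℝ) ^ (-((M + n : ℕ) : ℝ) * α) * Real.sin ((2 : ℝ) ^ (M + n) * π * v)

theorem weierstrassTail_integral_lower (α : ℝ) (hα : α ∈ Set.Ioo (0 : ℝ) 1)
    (M : ℕ) (hM : 1 ≤ M) (ε : ℝ) (hε : ε = (2 : ℝ) ^ (-(M : ℝ)))
    (v₀ u : ℝ) (hu : u ∈ Set.Ioo 0 ε) :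
    ∫ v in (v₀ - ε)..(v₀ + ε),
        (weierstrassTail α M v - weierstrassTail α M (v - u)) ^ 2 ≥
      (4 : ℝ) ^ α * ε * u ^ (2 * α) := by
  classical
  obtain ⟨hα1, hα2⟩ := hα
  obtain ⟨hu0, huε⟩ := hu
  have hπ := Real.pi_pos
  have h2M : (0:ℝ) < 2 ^ M := by positivity
  have hεinv : ε = ((2:ℝ) ^ M)⁻¹ := by
    rw [hε, Real.rpow_neg (by norm_num), Real.rpow_natCast]
  have hε0 : 0 < ε := by rw [hεinv]; positivity
  have hle : v₀ - ε ≤ v₀ + ε := by linarith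
  -- coefficient sequence
  set S : ℕ → ℝ := fun n => (2:ℝ) ^ (-((M + n : ℕ) : ℝ) * α) with hSdef
  have hS0 : ∀ n, 0 < S n := fun n => Real.rpow_pos_of_pos (by norm_num) _
  have hSsum : Summable S := by
    have hr0 : (0:ℝ) ≤ (2:ℝ) ^ (-α) := (Real.rpow_pos_of_pos (by norm_num) _).le
    have hr1 : (2:ℝ) ^ (-α) < 1 :=
      Real.rpow_lt_one_of_one_lt_of_neg (by norm_num) (by linarith)
    have hgeom : Summable fun n : ℕ => ((2:ℝ) ^ (-α)) ^ (M + n) := by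
      simp only [pow_add]
      exact (summable_geometric_of_lt_one hr0 hr1).mul_left _
    refine hgeom.congr fun n => ?_
    rw [← Real.rpow_natCast ((2:ℝ) ^ (-α)) (M + n), ← Real.rpow_mul (by norm_num : (0:ℝ) ≤ 2),
      hSdef]
    congr 1
    push_cast
    ring
  -- the series defining g converges
  have htermsum : ∀ w : ℝ, Summable
      (fun n : ℕ => (2:ℝ) ^ (-((M + n : ℕ) : ℝ) * α) * Real.sin ((2:ℝ) ^ (M + n) * π * w)) := by
    intro w
    apply Summable.of_norm_bounded hSsum
    intro n
    rw [norm_mul, Real.norm_eq_abs, Real.norm_eq_abs, abs_of_pos (hS0 n)]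
    calc S n * |Real.sin ((2:ℝ) ^ (M + n) * π * w)| ≤ S n * 1 := by
          apply mul_le_mul_of_nonneg_left _ (hS0 n).le
          exact abs_le.mpr ⟨Real.neg_one_le_sin _, Real.sin_le_one _⟩
      _ = S n := mul_one _
  have hgsum : ∀ w : ℝ, HasSum
      (fun n : ℕ => (2:ℝ) ^ (-((M + n : ℕ) : ℝ) * α) * Real.sin ((2:ℝ) ^ (M + n) * π * w))
      (weierstrassTail α M w) := fun w => (htermsum w).hasSum
  -- the difference series in cosine form
  set c : ℕ → ℝ := fun n => 2 * S n * Real.sin ((2:ℝ) ^ (M + n) * π * u / 2) with hcdef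
  set F : ℕ → ℝ → ℝ := fun n v => c n * Real.cos ((2:ℝ) ^ (M + n) * π * (v - u / 2)) with hFdef
  have hFrep : ∀ v : ℝ, HasSum (fun n => F n v)
      (weierstrassTail α M v - weierstrassTail α M (v - u)) := by
    intro v
    have h := (hgsum v).sub (hgsum (v - u))
    refine HasSum.congr_fun h fun n => ?_
    rw [← mul_sub, Real.sin_sub_sin,
      show ((2:ℝ) ^ (M + n) * π * v - (2:ℝ) ^ (M + n) * π * (v - u)) / 2
        = (2:ℝ) ^ (M + n) * π * u / 2 by ring,
      show ((2:ℝ) ^ (M + n) * π * v + (2:ℝ) ^ (M + n) * π * (v - u)) / 2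
        = (2:ℝ) ^ (M + n) * π * (v - u / 2) by ring,
      hFdef, hcdef]
    ring
  have hFbound : ∀ n v, ‖F n v‖ ≤ 2 * S n := by
    intro n v
    rw [hFdef, Real.norm_eq_abs, abs_mul]
    have h1 : |c n| ≤ 2 * S n := by
      rw [hcdef]
      calc |2 * S n * Real.sin ((2:ℝ) ^ (M + n) * π * u / 2)|
          = 2 * S n * |Real.sin ((2:ℝ) ^ (M + n) * π * u / 2)| := by
            rw [abs_mul, abs_of_pos (by positivity : (0:ℝ) < 2 * S n)]
        _ ≤ 2 * S n * 1 := mul_le_mul_of_nonneg_left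
            (abs_le.mpr ⟨Real.neg_one_le_sin _, Real.sin_le_one _⟩) (by positivity)
        _ = 2 * S n := mul_one _
    calc |c n| * |Real.cos ((2:ℝ) ^ (M + n) * π * (v - u / 2))| ≤ |c n| * 1 :=
          mul_le_mul_of_nonneg_left
            (abs_le.mpr ⟨Real.neg_one_le_cos _, Real.cos_le_one _⟩) (abs_nonneg _)
      _ = |c n| := mul_one _
      _ ≤ 2 * S n := h1
  have hFcont : ∀ n, Continuous (F n) := by intro n; rw [hFdef]; fun_prop
  have hfcont : Continuous (fun v : ℝ => weierstrassTail α M v - weierstrassTail α M (v - u)) := by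
    have hfeq : (fun v : ℝ => weierstrassTail α M v - weierstrassTail α M (v - u))
        = fun v => ∑' n, F n v := funext fun v => ((hFrep v).tsum_eq).symm
    rw [hfeq]
    exact continuous_tsum hFcont (hSsum.mul_left 2) hFbound
  -- choose the frequency K
  have hex : ∃ n : ℕ, 1 < (2:ℝ) ^ (n + 1) * u := by
    obtain ⟨n, hn⟩ := pow_unbounded_of_one_lt (1 / u) (one_lt_two (α := ℝ))
    refine ⟨n, ?_⟩
    rw [div_lt_iff₀ hu0] at hn
    have h2 : (2:ℝ) ^ n ≤ 2 ^ (n + 1) := by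
      apply pow_le_pow_right₀ (by norm_num) (by omega)
    nlinarith
  set K := Nat.find hex with hKdef
  have hK1 : 1 < (2:ℝ) ^ (K + 1) * u := Nat.find_spec hex
  have hKM : M ≤ K := by
    by_contra hc
    push_neg at hc
    have h1 : (2:ℝ) ^ (K + 1) ≤ 2 ^ M := pow_le_pow_right₀ (by norm_num) (by omega)
    have h2 : (2:ℝ) ^ M * u < 1 := by
      have := mul_lt_mul_of_pos_left huε h2M
      rwa [hεinv, mul_inv_cancel₀ h2M.ne'] at this
    nlinarith
  have hK2 : (2:ℝ) ^ K * u ≤ 1 := by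
    have hKpos : 1 ≤ K := le_trans hM hKM
    have hmin := Nat.find_min hex (show K - 1 < K by omega)
    push_neg at hmin
    rwa [show K - 1 + 1 = K by omega] at hmin
  set j := K - M with hjdef
  have hMj : M + j = K := by omega
  -- the comparison harmonic
  set φ : ℝ → ℝ := fun v => Real.cos ((2:ℝ) ^ K * π * (v - u / 2)) with hφdef
  have hφcont : Continuous φ := by rw [hφdef]; fun_prop
  have hb : v₀ + ε = (v₀ - ε) + 2 * ((2:ℝ) ^ M)⁻¹ := by rw [hεinv]; ring
  -- ∫ φ² = ε
  have hIφφ : ∫ v in (v₀ - ε)..(v₀ + ε), φ v * φ v = ε := by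
    rw [hb, hφdef]
    have := orth M K K hKM hKM (u / 2) (v₀ - ε)
    rw [if_pos rfl] at this
    rw [this, hεinv]
  -- ∫ Fₙ φ
  have hIFφ : ∀ n, ∫ v in (v₀ - ε)..(v₀ + ε), F n v * φ v
      = c n * (if M + n = K then ε else 0) := by
    intro n
    have harr : ∀ v, F n v * φ v
        = c n * (Real.cos ((2:ℝ) ^ (M + n) * π * (v - u / 2))
           * Real.cos ((2:ℝ) ^ K * π * (v - u / 2))) := by
      intro v; rw [hFdef, hφdef]; ring
    simp only [harr]
    rw [intervalIntegral.integral_const_mul, hb,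
      orth M (M + n) K (Nat.le_add_right M n) hKM (u / 2) (v₀ - ε), hεinv]
  -- swap integral and sum
  have hswap : ∫ v in (v₀ - ε)..(v₀ + ε),
      (weierstrassTail α M v - weierstrassTail α M (v - u)) * φ v
      = ∑' n, ∫ v in (v₀ - ε)..(v₀ + ε), F n v * φ v := by
    have hs : HasSum (fun n => ∫ v in Set.Ioc (v₀ - ε) (v₀ + ε), F n v * φ v)
        (∫ v in Set.Ioc (v₀ - ε) (v₀ + ε),
          (weierstrassTail α M v - weierstrassTail α M (v - u)) * φ v) := by
      apply hasSum_integral_of_dominated_convergence (fun n (_ : ℝ) => 2 * S n)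
      · exact fun n => ((hFcont n).mul hφcont).aestronglyMeasurable
      · intro n
        filter_upwards with v
        calc ‖F n v * φ v‖ = ‖F n v‖ * ‖φ v‖ := norm_mul _ _
          _ ≤ (2 * S n) * 1 := by
              apply mul_le_mul (hFbound n v) _ (norm_nonneg _) (by positivity)
              rw [hφdef, Real.norm_eq_abs]
              exact abs_le.mpr ⟨Real.neg_one_le_cos _, Real.cos_le_one _⟩
          _ = 2 * S n := mul_one _
      · filter_upwards with v
        exact hSsum.mul_left 2
      · exact integrableOn_const measure_Ioc_lt_top.ne
      · filter_upwards with v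
        exact (hFrep v).mul_right (φ v)
    rw [intervalIntegral.integral_of_le hle, ← hs.tsum_eq]
    exact tsum_congr fun n => (intervalIntegral.integral_of_le hle).symm
  have hIfφ : ∫ v in (v₀ - ε)..(v₀ + ε),
      (weierstrassTail α M v - weierstrassTail α M (v - u)) * φ v = c j * ε := by
    rw [hswap]
    calc ∑' n, ∫ v in (v₀ - ε)..(v₀ + ε), F n v * φ v
        = ∑' n, c n * (if M + n = K then ε else 0) := tsum_congr hIFφ
      _ = c j * ε := by
          rw [tsum_eq_single j (fun n hn => by rw [if_neg (by omega), mul_zero])]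
          rw [if_pos hMj]
  -- expand the square and use nonnegativity
  have hInt : ∀ g : ℝ → ℝ, Continuous g → IntervalIntegrable g volume (v₀ - ε) (v₀ + ε) :=
    fun g hg => hg.intervalIntegrable _ _
  have h0 : 0 ≤ ∫ v in (v₀ - ε)..(v₀ + ε),
      ((weierstrassTail α M v - weierstrassTail α M (v - u)) - c j * φ v) ^ 2 :=
    intervalIntegral.integral_nonneg hle (fun x _ => sq_nonneg _)
  have hexp : ∫ v in (v₀ - ε)..(v₀ + ε),
      ((weierstrassTail α M v - weierstrassTail α M (v - u)) - c j * φ v) ^ 2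
      = (∫ v in (v₀ - ε)..(v₀ + ε),
          (weierstrassTail α M v - weierstrassTail α M (v - u)) ^ 2)
        - (2 * c j) * (∫ v in (v₀ - ε)..(v₀ + ε),
            (weierstrassTail α M v - weierstrassTail α M (v - u)) * φ v)
        + (c j) ^ 2 * ∫ v in (v₀ - ε)..(v₀ + ε), φ v * φ v := by
    have hkey : ∀ v, ((weierstrassTail α M v - weierstrassTail α M (v - u)) - c j * φ v) ^ 2
        = (weierstrassTail α M v - weierstrassTail α M (v - u)) ^ 2
          - (2 * c j) * ((weierstrassTail α M v - weierstrassTail α M (v - u)) * φ v)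
          + (c j) ^ 2 * (φ v * φ v) := by intro v; ring
    simp only [hkey]
    rw [intervalIntegral.integral_add, intervalIntegral.integral_sub,
      intervalIntegral.integral_const_mul, intervalIntegral.integral_const_mul]
    · exact hInt _ (hfcont.pow 2)
    · exact (hInt _ (hfcont.mul hφcont)).const_mul _
    · exact ((hInt _ (hfcont.pow 2)).sub ((hInt _ (hfcont.mul hφcont)).const_mul _))
    · exact (hInt _ (hφcont.mul hφcont)).const_mul _
  have hlower : (c j) ^ 2 * ε ≤ ∫ v in (v₀ - ε)..(v₀ + ε),
      (weierstrassTail α M v - weierstrassTail α M (v - u)) ^ 2 := by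
    rw [hexp, hIfφ, hIφφ] at h0
    nlinarith [h0]
  -- final arithmetic
  have hTle : (c j) ^ 2 ≥ (2 * ((2:ℝ) ^ K) ^ (-α) * ((2:ℝ) ^ K * u)) ^ 2 := by
    have hT0 : (0:ℝ) < (2:ℝ) ^ K := by positivity
    have hSj : S j = ((2:ℝ) ^ K) ^ (-α) := by
      rw [hSdef]
      simp only [hMj]
      rw [show -((K:ℕ):ℝ) * α = ((K:ℕ):ℝ) * (-α) by ring,
        Real.rpow_mul (by norm_num : (0:ℝ) ≤ 2), Real.rpow_natCast]
    have hsin : (2:ℝ) ^ K * u ≤ Real.sin ((2:ℝ) ^ K * π * u / 2) := by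
      have h1 : 0 ≤ (2:ℝ) ^ K * π * u / 2 := by positivity
      have h2 : (2:ℝ) ^ K * π * u / 2 ≤ π / 2 := by nlinarith
      have := Real.mul_le_sin h1 h2
      calc (2:ℝ) ^ K * u = 2 / π * ((2:ℝ) ^ K * π * u / 2) := by
            field_simp
        _ ≤ Real.sin ((2:ℝ) ^ K * π * u / 2) := this
    have hcj : c j = 2 * S j * Real.sin ((2:ℝ) ^ K * π * u / 2) := by
      rw [hcdef]
      simp only [hMj]
    have hlb : 2 * ((2:ℝ) ^ K) ^ (-α) * ((2:ℝ) ^ K * u) ≤ c j := by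
      rw [hcj, hSj]
      exact mul_le_mul_of_nonneg_left hsin (by positivity)
    have hlb0 : 0 ≤ 2 * ((2:ℝ) ^ K) ^ (-α) * ((2:ℝ) ^ K * u) := by positivity
    exact pow_le_pow_left₀ hlb0 hlb 2
  have harith : (4:ℝ) ^ α * u ^ (2 * α) ≤ (2 * ((2:ℝ) ^ K) ^ (-α) * ((2:ℝ) ^ K * u)) ^ 2 := by
    apply arithKey hα1 hα2 hu0 (by positivity)
    rw [pow_succ] at hK1
    nlinarith
  have hfinal : (4:ℝ) ^ α * ε * u ^ (2 * α) ≤ (c j) ^ 2 * ε := by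
    have : (4:ℝ) ^ α * u ^ (2 * α) ≤ (c j) ^ 2 := le_trans harith hTle
    nlinarith [Real.rpow_nonneg (le_of_lt hu0) (2 * α), Real.rpow_nonneg (by norm_num : (0:ℝ) ≤ 4) α]
  exact le_trans hfinal hlower
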